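/- arXiv:2001.06164 — 4 statements merged into one kernel-verified Lean document; each statement's English description precedes it below -/
import Mathlib

section
/- Let d ≥ 3, 1 ≤ k ≤ d - 2, and let B_{d,k}(z) = Σ_{i=0}^{k} (-1)^{k-i} · [∏_{j=0, j≠i}^{k}(d - j)] · (1/((k-i)!·i!)) · z^{d-i} be the normalized single-cycle Belyi polynomial. Suppose p is a prime with k + 1 < p and p divides d - r for some unique 0 ≤ r ≤ k (and p divides no other d - j with 0 ≤ j ≤ k). Then, reducing coefficients modulo p, B_{d,k} is congruent to the monomial s·z^{d-r}, where s = (-1)^{k-r} · [∏_{j=0, j≠r}^{k}(d-j)] · ((k-r)!·r!)^{-1} is a nonzero element of F_p. -/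
/-!
Only the `i = r` term of `B_{d,k}` survives modulo `p`: for `i ≠ r` the product
`∏_{j ≠ i} (d - j)` contains the factor `d - r ≡ 0`. The surviving coefficient is a product of
units of `𝔽_p`: the factors `d - j` with `j ≠ r` are not divisible by `p`, and the factorials
`(k - r)!` and `r!` only involve numbers below `p`.
-/

open Polynomial

theorem ZMod.natCast_sub_natCast_eq_zero_iff {p d j : ℕ} (hjd : j ≤ d) :
    (d : ZMod p) - j = 0 ↔ p ∣ d - j := by
  rw [← Nat.cast_sub hjd, ZMod.natCast_eq_zero_iff]

theorem ZMod.natCast_sub_natCast_ne_zero {p d j : ℕ} (h : ¬ p ∣ d - j) :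
    (d : ZMod p) - j ≠ 0 := by
  have hjd : j ≤ d := by
    by_contra! hdj
    exact h (by simp [Nat.sub_eq_zero_of_le hdj.le])
  rwa [Ne, ZMod.natCast_sub_natCast_eq_zero_iff hjd]

theorem ZMod.natCast_factorial_ne_zero {p n : ℕ} [Fact p.Prime] (hn : n < p) :
    (n.factorial : ZMod p) ≠ 0 :=
  ((IsUnit.natCast_factorial_iff_of_charP p).2 hn).ne_zero

theorem Polynomial.sum_C_mul_prod_erase_mul_X_pow_eq_single {R ι : Type*} [CommSemiring R]
    [DecidableEq ι] {s : Finset ι} {f : ι → R} {r : ι} (hr : r ∈ s) (hfr : f r = 0)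
    (a b : ι → R) (e : ι → ℕ) :
    ∑ i ∈ s, C (a i * (∏ j ∈ s.erase i, f j) * b i) * X ^ e i
      = C (a r * (∏ j ∈ s.erase r, f j) * b r) * X ^ e r := by
  refine Finset.sum_eq_single_of_mem r hr fun i _ hir => ?_
  rw [Finset.prod_eq_zero (Finset.mem_erase.2 ⟨Ne.symm hir, hr⟩) hfr]
  simp

theorem stmt4_general (d k : ℕ) (hk2 : k ≤ d - 2)
    (p : ℕ) [Fact p.Prime] (hkp : k + 1 < p)
    (r : ℕ) (hr : r ≤ k) (hpr : p ∣ d - r)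
    (hunique : ∀ j ≤ k, j ≠ r → ¬ p ∣ d - j) :
    (∑ i ∈ Finset.range (k + 1),
        C ((-1 : ZMod p) ^ (k - i)
            * (∏ j ∈ (Finset.range (k + 1)).erase i, ((d : ZMod p) - (j : ZMod p)))
            * (((Nat.factorial (k - i) * Nat.factorial i : ℕ) : ZMod p))⁻¹)
          * X ^ (d - i))
      = C ((-1 : ZMod p) ^ (k - r)
            * (∏ j ∈ (Finset.range (k + 1)).erase r, ((d : ZMod p) - (j : ZMod p)))
            * (((Nat.factorial (k - r) * Nat.factorial r : ℕ) : ZMod p))⁻¹)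
          * X ^ (d - r)
    ∧ (-1 : ZMod p) ^ (k - r)
        * (∏ j ∈ (Finset.range (k + 1)).erase r, ((d : ZMod p) - (j : ZMod p)))
        * (((Nat.factorial (k - r) * Nat.factorial r : ℕ) : ZMod p))⁻¹ ≠ 0 := by
  have hr_mem : r ∈ Finset.range (k + 1) := Finset.mem_range.2 (Nat.lt_succ_of_le hr)
  refine ⟨sum_C_mul_prod_erase_mul_X_pow_eq_single hr_mem
    ((ZMod.natCast_sub_natCast_eq_zero_iff (by omega)).2 hpr) _ _ _, ?_⟩
  have hprod : ∏ j ∈ (Finset.range (k + 1)).erase r, ((d : ZMod p) - (j : ZMod p)) ≠ 0 :=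
    Finset.prod_ne_zero_iff.2 fun j hj =>
      have ⟨hjr, hjk⟩ := Finset.mem_erase.1 hj
      ZMod.natCast_sub_natCast_ne_zero
        (hunique j (Nat.lt_succ_iff.1 (Finset.mem_range.1 hjk)) hjr)
  have hfact : ((Nat.factorial (k - r) * Nat.factorial r : ℕ) : ZMod p) ≠ 0 := by
    rw [Nat.cast_mul]
    exact mul_ne_zero (ZMod.natCast_factorial_ne_zero (by omega))
      (ZMod.natCast_factorial_ne_zero (by omega))
  exact mul_ne_zero (mul_ne_zero (pow_ne_zero _ (neg_ne_zero.2 one_ne_zero)) hprod)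
    (inv_ne_zero hfact)

/-- Reduction of the normalized single-cycle Belyi polynomial `B_{d,k}` modulo a suitable
prime `p`: it is congruent to the monomial `s • z^(d-r)` with `s ≠ 0` in `𝔽_p`. -/
theorem stmt4 (d k : ℕ) (hd : 3 ≤ d) (hk1 : 1 ≤ k) (hk2 : k ≤ d - 2)
    (p : ℕ) [Fact p.Prime] (hkp : k + 1 < p)
    (r : ℕ) (hr : r ≤ k) (hpr : p ∣ d - r)
    (hunique : ∀ j ≤ k, j ≠ r → ¬ p ∣ d - j) :
    (∑ i ∈ Finset.range (k + 1),
        C ((-1 : ZMod p) ^ (k - i)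
            * (∏ j ∈ (Finset.range (k + 1)).erase i, ((d : ZMod p) - (j : ZMod p)))
            * (((Nat.factorial (k - i) * Nat.factorial i : ℕ) : ZMod p))⁻¹)
          * X ^ (d - i))
      = C ((-1 : ZMod p) ^ (k - r)
            * (∏ j ∈ (Finset.range (k + 1)).erase r, ((d : ZMod p) - (j : ZMod p)))
            * (((Nat.factorial (k - r) * Nat.factorial r : ℕ) : ZMod p))⁻¹)
          * X ^ (d - r)
    ∧ (-1 : ZMod p) ^ (k - r)
        * (∏ j ∈ (Finset.range (k + 1)).erase r, ((d : ZMod p) - (j : ZMod p)))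
        * (((Nat.factorial (k - r) * Nat.factorial r : ℕ) : ZMod p))⁻¹ ≠ 0 :=
  stmt4_general d k hk2 p hkp r hr hpr hunique
end

section
/- For all σ₁, σ₃ in a field K of characteristic 0 with 4σ₁³ − 36σ₁² + 81σ₁ + 27σ₃ − 54 ≠ 0, the rational function F(z) = ((12−2σ₁)z³ + (2σ₁²−15σ₁+18)z² + 2σ₁σ₃−3σ₃) / (−3z³ + (9+3σ₁)z² − (18σ₁−27)z + 4σ₁²−12σ₁+3σ₃+9) satisfies F(2σ₁/3 − 1) = 2σ₁/3 − 1, and the point 2σ₁/3 − 1 is totally ramified (the numerator of F(z) − F(2σ₁/3 − 1) has z = 2σ₁/3 − 1 as a triple root). -/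
/-!
With `p = 2σ₁/3 − 1`, the leading coefficient of `N − p·D` is `12 − 2σ₁ + 3p = 9`, and in
fact `N − p·D = 9 (z − p)³` identically; evaluating at `p` gives `N(p) = p·D(p)`, while
`D(p)` is one ninth of the resultant expression, hence nonzero.
-/

open Polynomial

namespace NormalForm

variable {K : Type*} [Field K]

noncomputable def num (σ₁ σ₃ : K) : K[X] :=
  C (12 - 2 * σ₁) * X ^ 3 + C (2 * σ₁ ^ 2 - 15 * σ₁ + 18) * X ^ 2 + C (2 * σ₁ * σ₃ - 3 * σ₃)

noncomputable def den (σ₁ σ₃ : K) : K[X] :=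
  C (-3) * X ^ 3 + C (9 + 3 * σ₁) * X ^ 2 - C (18 * σ₁ - 27) * X
    + C (4 * σ₁ ^ 2 - 12 * σ₁ + 3 * σ₃ + 9)

variable [CharZero K]

theorem eval_den (σ₁ σ₃ : K) :
    (den σ₁ σ₃).eval (2 * σ₁ / 3 - 1) =
      (4 * σ₁ ^ 3 - 36 * σ₁ ^ 2 + 81 * σ₁ + 27 * σ₃ - 54) / 9 := by
  simp only [den, eval_add, eval_sub, eval_mul, eval_pow, eval_C, eval_X]
  field_simp
  ring

theorem num_sub_C_mul_den (σ₁ σ₃ : K) :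
    num σ₁ σ₃ - C (2 * σ₁ / 3 - 1) * den σ₁ σ₃ = C 9 * (X - C (2 * σ₁ / 3 - 1)) ^ 3 := by
  have : Infinite K := Infinite.of_injective Nat.cast Nat.cast_injective
  refine Polynomial.funext fun x => ?_
  simp only [num, den, eval_add, eval_sub, eval_mul, eval_pow, eval_C, eval_X]
  field_simp
  ring

end NormalForm

/-- The first normal form of Theorem 1 has a totally ramified fixed point at
`z = 2σ₁/3 − 1`: writing `F = Np/Dp`, we have `F(pt) = pt` and `pt` is a triple root of
the numerator of `F(z) − pt`. -/
theorem stmt14 (K : Type*) [Field K] [CharZero K] (σ₁ σ₃ : K)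
    (hres : 4 * σ₁ ^ 3 - 36 * σ₁ ^ 2 + 81 * σ₁ + 27 * σ₃ - 54 ≠ 0)
    (Np Dp : K[X]) (pt : K)
    (hNp : Np = C (12 - 2 * σ₁) * X ^ 3 + C (2 * σ₁ ^ 2 - 15 * σ₁ + 18) * X ^ 2
        + C (2 * σ₁ * σ₃ - 3 * σ₃))
    (hDp : Dp = C (-3) * X ^ 3 + C (9 + 3 * σ₁) * X ^ 2 - C (18 * σ₁ - 27) * X
        + C (4 * σ₁ ^ 2 - 12 * σ₁ + 3 * σ₃ + 9))
    (hpt : pt = 2 * σ₁ / 3 - 1) :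
    Np.eval pt = pt * Dp.eval pt ∧ Dp.eval pt ≠ 0 ∧
    (X - C pt) ^ 3 ∣ (Np - C pt * Dp) := by
  have hNp : Np = NormalForm.num σ₁ σ₃ := hNp
  have hDp : Dp = NormalForm.den σ₁ σ₃ := hDp
  subst hNp hDp hpt
  have hcube := NormalForm.num_sub_C_mul_den σ₁ σ₃
  refine ⟨?_, ?_, ⟨C 9, by rw [hcube, mul_comm]⟩⟩
  · have hroot := congrArg (eval (2 * σ₁ / 3 - 1)) hcube
    simp only [eval_sub, eval_mul, eval_C, eval_pow, eval_X, sub_self] at hroot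
    linear_combination hroot
  · rw [NormalForm.eval_den]
    exact div_ne_zero hres (by norm_num)
end

section
/- The rational map F(z) = (−3z³ + z² − 2z − 2)/(z³ − 5z² + 4z − 4) over ℚ has exactly four distinct fixed points {−i, i, 1−i, 1+i} (where i² = −1), each equal to its own multiplier: F'(x) = x at each fixed point x. Moreover Σ over the four fixed points of 1/(1−x) = 1. -/
open Polynomial Complex

/-!
The fixed points of `F = N / D` are the roots of `N - X * D = -(X ^ 2 + 1) * (X ^ 2 - 2 * X + 2)`.
None of them is a pole, because `N - X * D` and `D` are coprime (an explicit Bézout identity).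
The multiplier identity `N' D - N D' = X D ^ 2` holds at every fixed point because
`N' D - N D' - X D ^ 2` is divisible by `N - X * D`.
-/

namespace FixedPointIndexExample

noncomputable abbrev num : ℂ[X] := C (-3) * X ^ 3 + X ^ 2 - C 2 * X - C 2

noncomputable abbrev den : ℂ[X] := X ^ 3 - C 5 * X ^ 2 + C 4 * X - C 4

lemma num_sub_X_mul_den_eq :
    num - X * den = -((({I, -I, 1 + I, 1 - I} : Multiset ℂ).map (X - C ·)).prod) := by
  have hI : (C I : ℂ[X]) ^ 2 = -1 := by rw [← C_pow, I_sq, C_neg, C_1]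
  simp only [num, den, Multiset.insert_eq_cons, Multiset.map_cons, Multiset.map_singleton,
    Multiset.prod_cons, Multiset.prod_singleton, map_neg, map_add, map_sub, map_one, map_ofNat]
  linear_combination (-2 * X ^ 2 + 2 * X + (C I) ^ 2 - 2) * hI

lemma roots_num_sub_X_mul_den : (num - X * den).roots = {I, -I, 1 + I, 1 - I} := by
  rw [num_sub_X_mul_den_eq, roots_neg, roots_multiset_prod_X_sub_C]

lemma bezout_num_sub_X_mul_den_den :
    (C 3 * X ^ 2 - X - C 51) * (num - X * den) + (C 3 * X ^ 3 + C 8 * X ^ 2 - C 12 * X + C 13) * den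
      = C 50 := by
  simp only [num, den, map_neg, map_ofNat]
  ring

lemma multiplier_sub_eq :
    derivative num * den - num * derivative den - X * den ^ 2
      = (num - X * den) * (X ^ 3 - C 8 * X ^ 2 + C 14 * X - C 8) := by
  simp only [num, den, map_neg, map_ofNat, derivative_add, derivative_sub,
    derivative_mul, derivative_ofNat, derivative_X_pow, derivative_X, Nat.cast_ofNat]
  ring

variable {x : ℂ}

lemma eval_den_ne_zero_of_isRoot (hx : (num - X * den).IsRoot x) : den.eval x ≠ 0 := by
  intro hden
  have h := congrArg (eval x) bezout_num_sub_X_mul_den_den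
  rw [eval_add, eval_mul, eval_mul, hx.eq_zero, hden, eval_C] at h
  norm_num at h

lemma eval_multiplier_of_isRoot (hx : (num - X * den).IsRoot x) :
    (derivative num * den - num * derivative den).eval x = x * den.eval x ^ 2 := by
  have h := congrArg (eval x) multiplier_sub_eq
  rwa [eval_mul, hx.eq_zero, zero_mul, eval_sub, eval_mul, eval_pow, eval_X, sub_eq_zero] at h

lemma sum_one_div_one_sub_fixedPoints :
    1 / (1 - I) + 1 / (1 - (-I)) + 1 / (1 - (1 + I)) + 1 / (1 - (1 - I)) = 1 := by
  have h₁ : (1 : ℂ) - I ≠ 0 := by simp [Complex.ext_iff]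
  have h₂ : (1 : ℂ) + I ≠ 0 := by simp [Complex.ext_iff]
  rw [sub_neg_eq_add, sub_add_cancel_left, sub_sub_cancel]
  field_simp
  linear_combination I * I_sq

end FixedPointIndexExample

open FixedPointIndexExample in
/-- The rational map `F(z) = (−3z³ + z² − 2z − 2)/(z³ − 5z² + 4z − 4)` has exactly four
distinct fixed points `{−i, i, 1−i, 1+i}`, each equal to its own multiplier
(`F'(x) = x`), and `Σ 1/(1−x) = 1` over the four fixed points. -/
theorem stmt17 (Np Dp : ℂ[X])
    (hNp : Np = C (-3) * X ^ 3 + X ^ 2 - C 2 * X - C 2)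
    (hDp : Dp = X ^ 3 - C 5 * X ^ 2 + C 4 * X - C 4) :
    (Np - X * Dp).roots = {I, -I, 1 + I, 1 - I} ∧
    (∀ x ∈ ({I, -I, 1 + I, 1 - I} : Set ℂ),
      Dp.eval x ≠ 0 ∧
      (derivative Np * Dp - Np * derivative Dp).eval x = x * (Dp.eval x) ^ 2) ∧
    1 / (1 - I) + 1 / (1 - (-I)) + 1 / (1 - (1 + I)) + 1 / (1 - (1 - I)) = 1 := by
  subst hNp hDp
  refine ⟨roots_num_sub_X_mul_den, fun x hx => ?_, sum_one_div_one_sub_fixedPoints⟩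
  have hroot : (num - X * den).IsRoot x :=
    isRoot_of_mem_roots (by rw [roots_num_sub_X_mul_den]; simpa using hx)
  exact ⟨eval_den_ne_zero_of_isRoot hroot, eval_multiplier_of_isRoot hroot⟩
end

section
/- Let d ≥ 3 and 1 ≤ k₀, k₁ ≤ d − 2 with k₀ + k₁ = d − 1. Define B_{d,k}(z) = Σ_{i=0}^{k}(−1)^{k−i}·[∏_{j=0,j≠i}^{k}(d−j)]·(1/((k−i)!·i!))·z^{d−i}, so that B_{d,k}(1) = 1. Then the polynomial φ(z) = 1 − z satisfies B_{d,k₁}(1 − z) = B_{d,k₁}(1) − B_{d,k₀}(z), and consequently f₀(z) = a·B_{d,k₀}(z) + c₀ and f₁(z) = a·B_{d,k₁}(z) + (1 − a − c₀) are conjugate via z ↦ 1 − z. -/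
open Polynomial Finset

namespace Stmt19Aux

variable {K : Type*} [Field K] [CharZero K]

/-- cast of descFactorial as a product of differences -/
lemma cast_descFactorial (K : Type*) [Field K] [CharZero K] (d k : ℕ) (h : k < d) :
    ((d.descFactorial (k+1) : ℕ) : K) = ∏ j ∈ range (k+1), ((d : K) - (j : K)) := by
  rw [Nat.descFactorial_eq_prod_range, Nat.cast_prod]
  refine Finset.prod_congr rfl fun j hj => ?_
  rw [Finset.mem_range] at hj
  rw [Nat.cast_sub (by omega)]

lemma descFactorial_ne_zero (K : Type*) [Field K] [CharZero K] {d k : ℕ} (h : k < d) :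
    ((d.descFactorial (k+1) : ℕ) : K) ≠ 0 := by
  have : d.descFactorial (k+1) ≠ 0 := by
    rw [Ne, Nat.descFactorial_eq_zero_iff_lt]; omega
  exact_mod_cast this

lemma cast_sub_ne_zero (K : Type*) [Field K] [CharZero K] {d i : ℕ} (h : i < d) :
    ((d : K) - (i : K)) ≠ 0 := by
  have : ((d : K) - (i : K)) = ((d - i : ℕ) : K) := by rw [Nat.cast_sub (by omega)]
  rw [this]
  exact_mod_cast Nat.sub_ne_zero_of_lt h

/-- key partial fraction sum identity -/
lemma sumid (K : Type*) [Field K] [CharZero K] :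
    ∀ (k d : ℕ), k < d →
      ∑ i ∈ range (k+1), (-1 : K)^(k-i) * (k.choose i : K) * ((d:K) - (i:K))⁻¹
        = (k.factorial : K) * ((d.descFactorial (k+1) : ℕ) : K)⁻¹ := by
  intro k
  induction k with
  | zero => intro d hd; simp
  | succ k ih =>
    intro d hd
    have hd1 : 1 ≤ d := by omega
    have hkd : k < d - 1 := by omega
    have hkd' : k < d := by omega
    have hd0 : (d : K) ≠ 0 := by exact Nat.cast_ne_zero.mpr (by omega)
    set g : ℕ → K := fun j => (-1 : K)^(k+1-j) * (k.choose j : K) * ((d:K) - (j:K))⁻¹ with hg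
    have key : ∑ i ∈ range (k+1+1), (-1:K)^(k+1-i) * ((k+1).choose i : K) * ((d:K)-(i:K))⁻¹
        = (∑ i ∈ range (k+1), (-1:K)^(k-i) * (k.choose i : K) * (((d-1:ℕ):K) - (i:K))⁻¹)
          + ∑ j ∈ range (k+1), g j := by
      rw [Finset.sum_range_succ']
      have h2 : ∑ j ∈ range (k+1), g j = (∑ i ∈ range k, g (i+1)) + g 0 :=
        Finset.sum_range_succ' g k
      have h3 : (∑ i ∈ range k, g (i+1)) = (∑ i ∈ range (k+1), g (i+1)) - g (k+1) := by
        rw [Finset.sum_range_succ]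
        ring
      have hgtop : g (k+1) = 0 := by simp [hg, Nat.choose_succ_self]
      rw [h2, h3, hgtop, sub_zero, ← add_assoc, ← Finset.sum_add_distrib]
      congr 1
      · refine Finset.sum_congr rfl fun i hi => ?_
        rw [Finset.mem_range] at hi
        have hcast : ((d:K) - ((i+1:ℕ):K)) = (((d-1:ℕ):K) - (i:K)) := by
          push_cast [Nat.cast_sub hd1]; ring
        simp only [hg]
        rw [Nat.succ_sub_succ, Nat.choose_succ_succ, Nat.cast_add, hcast]
        ring
      · simp [hg]
    rw [key]
    have hgsum : ∑ j ∈ range (k+1), g j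
        = - ∑ j ∈ range (k+1), (-1:K)^(k-j) * (k.choose j : K) * ((d:K)-(j:K))⁻¹ := by
      rw [← Finset.sum_neg_distrib]
      refine Finset.sum_congr rfl fun j hj => ?_
      rw [Finset.mem_range] at hj
      have h : k + 1 - j = (k - j) + 1 := by omega
      simp only [hg]
      rw [h, pow_succ]
      ring
    rw [hgsum, ih (d-1) hkd, ih d hkd']
    set A : K := (((d-1).descFactorial (k+1) : ℕ) : K) with hA
    set B : K := ((d.descFactorial (k+1) : ℕ) : K) with hB
    set Cd : K := ((d.descFactorial (k+2) : ℕ) : K) with hCd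
    have hCdA : Cd = (d:K) * A := by
      have hn : d.descFactorial (k+2) = d * (d-1).descFactorial (k+1) := by
        conv_lhs => rw [show d = (d-1)+1 by omega]
        rw [Nat.succ_descFactorial_succ, show d-1+1 = d by omega]
      rw [hCd, hn]; push_cast; ring
    have hCdB : Cd = ((d:K) - (k:K) - 1) * B := by
      have hn : d.descFactorial (k+2) = (d - (k+1)) * d.descFactorial (k+1) :=
        Nat.descFactorial_succ d (k+1)
      rw [hCd, hn]
      push_cast [Nat.cast_sub (show k+1 ≤ d by omega)]
      ring
    have hAne : A ≠ 0 := descFactorial_ne_zero K hkd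
    have hBne : B ≠ 0 := descFactorial_ne_zero K hkd'
    have hdk1 : ((d:K) - (k:K) - 1) ≠ 0 := by
      have : ((d:K) - (k:K) - 1) = ((d - (k+1) : ℕ) : K) := by
        push_cast [Nat.cast_sub (show k+1 ≤ d by omega)]; ring
      rw [this]
      exact_mod_cast Nat.sub_ne_zero_of_lt (by omega)
    have hCne : Cd ≠ 0 := by rw [hCdA]; exact mul_ne_zero hd0 hAne
    have hAi : (d:K) * Cd⁻¹ = A⁻¹ := by
      rw [hCdA, mul_inv, ← mul_assoc, mul_inv_cancel₀ hd0, one_mul]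
    have hBi : ((d:K) - (k:K) - 1) * Cd⁻¹ = B⁻¹ := by
      rw [hCdB, mul_inv, ← mul_assoc, mul_inv_cancel₀ hdk1, one_mul]
    rw [← hAi, ← hBi]
    push_cast [Nat.factorial_succ]
    ring


lemma coeff_id (K : Type*) [Field K] [CharZero K] {d k i : ℕ} (hik : i ≤ k) (h : k < d) :
    (∏ j ∈ (range (k+1)).erase i, ((d:K)-(j:K)))
        * (((Nat.factorial (k-i) * Nat.factorial i : ℕ):K))⁻¹ * ((d:K)-(i:K))
      = ((d.descFactorial (k+1) : ℕ):K) * ((k.factorial : ℕ):K)⁻¹ * (k.choose i : K) := by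
  have hprod : (∏ j ∈ (range (k+1)).erase i, ((d:K)-(j:K))) * ((d:K)-(i:K))
      = ((d.descFactorial (k+1) : ℕ):K) := by
    rw [cast_descFactorial K d k h]
    exact Finset.prod_erase_mul _ _ (Finset.mem_range.mpr (by omega))
  have hch : (k.choose i : K) * (((Nat.factorial (k-i) * Nat.factorial i : ℕ)):K)
      = ((k.factorial : ℕ):K) := by
    have h2 := Nat.choose_mul_factorial_mul_factorial hik
    push_cast [← h2]
    ring
  have hfne : (((Nat.factorial (k-i) * Nat.factorial i : ℕ)):K) ≠ 0 := by
    exact_mod_cast Nat.mul_ne_zero (Nat.factorial_ne_zero _) (Nat.factorial_ne_zero _)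
  have hkfne : ((k.factorial : ℕ):K) ≠ 0 := by exact_mod_cast k.factorial_ne_zero
  have hC : (k.choose i : K) = ((k.factorial : ℕ):K)
      * (((Nat.factorial (k-i) * Nat.factorial i : ℕ)):K)⁻¹ :=
    (eq_mul_inv_iff_mul_eq₀ hfne).mpr hch
  have hkk : ((k.factorial : ℕ):K)⁻¹ * ((k.factorial : ℕ):K) = 1 := inv_mul_cancel₀ hkfne
  calc (∏ j ∈ (range (k+1)).erase i, ((d:K)-(j:K)))
        * (((Nat.factorial (k-i) * Nat.factorial i : ℕ):K))⁻¹ * ((d:K)-(i:K))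
      = ((∏ j ∈ (range (k+1)).erase i, ((d:K)-(j:K))) * ((d:K)-(i:K)))
          * (((Nat.factorial (k-i) * Nat.factorial i : ℕ):K))⁻¹ := by ring
    _ = ((d.descFactorial (k+1) : ℕ):K)
          * (((Nat.factorial (k-i) * Nat.factorial i : ℕ):K))⁻¹ := by rw [hprod]
    _ = ((d.descFactorial (k+1) : ℕ):K) * ((k.factorial : ℕ):K)⁻¹ * (k.choose i : K) := by
        rw [hC]
        linear_combination (-(((d.descFactorial (k+1) : ℕ):K)
          * (((Nat.factorial (k-i) * Nat.factorial i : ℕ):K))⁻¹)) * hkk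

/-- value at 1 -/
lemma B_one (K : Type*) [Field K] [CharZero K] (d k : ℕ) (h : k < d) :
    ∑ i ∈ range (k+1), (-1:K)^(k-i) * (∏ j ∈ (range (k+1)).erase i, ((d:K)-(j:K)))
      * (((Nat.factorial (k-i) * Nat.factorial i : ℕ):K))⁻¹ = 1 := by
  have hDne := descFactorial_ne_zero K (d := d) (k := k) h
  have hkfne : ((k.factorial : ℕ):K) ≠ 0 := by exact_mod_cast k.factorial_ne_zero
  have hterm : ∀ i ∈ range (k+1),
      (-1:K)^(k-i) * (∏ j ∈ (range (k+1)).erase i, ((d:K)-(j:K)))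
        * (((Nat.factorial (k-i) * Nat.factorial i : ℕ):K))⁻¹
      = ((d.descFactorial (k+1) : ℕ):K) * ((k.factorial : ℕ):K)⁻¹
          * ((-1:K)^(k-i) * (k.choose i : K) * ((d:K)-(i:K))⁻¹) := by
    intro i hi
    rw [Finset.mem_range] at hi
    have hdi : ((d:K)-(i:K)) ≠ 0 := cast_sub_ne_zero K (by omega)
    have hc := coeff_id K (d := d) (k := k) (i := i) (by omega) h
    have hdd : ((d:K)-(i:K))⁻¹ * ((d:K)-(i:K)) = 1 := inv_mul_cancel₀ hdi
    linear_combination ((-1:K)^(k-i) * ((d:K)-(i:K))⁻¹) * hc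
      + (-((-1:K)^(k-i) * (∏ j ∈ (range (k+1)).erase i, ((d:K)-(j:K)))
          * (((Nat.factorial (k-i) * Nat.factorial i : ℕ):K))⁻¹)) * hdd
  rw [Finset.sum_congr rfl hterm, ← Finset.mul_sum, sumid K k d h]
  have hDD : ((d.descFactorial (k+1) : ℕ):K)⁻¹ * ((d.descFactorial (k+1) : ℕ):K) = 1 :=
    inv_mul_cancel₀ hDne
  have hkk : ((k.factorial : ℕ):K)⁻¹ * ((k.factorial : ℕ):K) = 1 := inv_mul_cancel₀ hkfne
  linear_combination (((d.descFactorial (k+1) : ℕ):K) * ((d.descFactorial (k+1) : ℕ):K)⁻¹) * hkk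
    + hDD

noncomputable def Bpoly (K : Type*) [Field K] [CharZero K] (d k : ℕ) : K[X] :=
  ∑ i ∈ range (k+1), C ((-1:K)^(k-i) * (∏ j ∈ (range (k+1)).erase i, ((d:K)-(j:K)))
      * (((Nat.factorial (k-i) * Nat.factorial i : ℕ):K))⁻¹) * X^(d-i)

lemma Bpoly_eval (K : Type*) [Field K] [CharZero K] (d k : ℕ) (z : K) :
    (Bpoly K d k).eval z = ∑ i ∈ range (k + 1),
      (-1 : K) ^ (k - i) * (∏ j ∈ (Finset.range (k + 1)).erase i, ((d : K) - (j : K)))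
        * (((Nat.factorial (k - i) * Nat.factorial i : ℕ) : K))⁻¹ * z ^ (d - i) := by
  rw [Bpoly, eval_finset_sum]
  simp only [eval_mul, eval_C, eval_pow, eval_X]

lemma Bpoly_deriv (K : Type*) [Field K] [CharZero K] (d k : ℕ) (h : k + 2 ≤ d) :
    derivative (Bpoly K d k)
      = C (((d.descFactorial (k+1) : ℕ):K) * ((k.factorial : ℕ):K)⁻¹)
          * (X^(d-k-1) * ((1:K[X]) - X)^k) := by
  have hexp : ((1:K[X]) - X)^k
      = ∑ m ∈ range (k+1), C ((-1:K)^m * (k.choose m : K)) * X^m := by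
    rw [sub_eq_add_neg, add_comm, add_pow]
    refine Finset.sum_congr rfl fun m hm => ?_
    rw [neg_pow, one_pow]
    simp only [C_mul, C_pow, map_neg, map_one, map_natCast]
    ring
  rw [Bpoly, derivative_sum, hexp, Finset.mul_sum, Finset.mul_sum]
  have hre := Finset.sum_range_reflect
    (fun m => C (((d.descFactorial (k+1) : ℕ):K) * ((k.factorial : ℕ):K)⁻¹)
      * (X^(d-k-1) * (C ((-1:K)^m * (k.choose m : K)) * X^m))) (k+1)
  rw [← hre]
  refine Finset.sum_congr rfl fun i hi => ?_
  rw [Finset.mem_range] at hi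
  have hik : i ≤ k := by omega
  rw [derivative_C_mul_X_pow]
  have he1 : k + 1 - 1 - i = k - i := by omega
  rw [he1]
  have hcast : ((d - i : ℕ) : K) = (d:K) - (i:K) := by
    rw [Nat.cast_sub (by omega)]
  have hch : k.choose (k - i) = k.choose i := Nat.choose_symm hik
  have hc := coeff_id K (d := d) (k := k) (i := i) hik (by omega)
  have hcoeff : (-1:K)^(k-i) * (∏ j ∈ (range (k+1)).erase i, ((d:K)-(j:K)))
        * (((Nat.factorial (k-i) * Nat.factorial i : ℕ):K))⁻¹ * ((d - i : ℕ) : K)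
      = ((d.descFactorial (k+1) : ℕ):K) * ((k.factorial : ℕ):K)⁻¹
          * ((-1:K)^(k-i) * (k.choose (k-i) : K)) := by
    rw [hcast, hch]
    linear_combination (-1:K)^(k-i) * hc
  rw [hcoeff, show d - i - 1 = (d-k-1) + (k-i) by omega, pow_add, C_mul]
  ring


lemma conj_poly (K : Type*) [Field K] [CharZero K] (d k₀ k₁ : ℕ)
    (h₀ : k₀ + 2 ≤ d) (h₁ : k₁ + 2 ≤ d) (hsum : k₀ + k₁ = d - 1) :
    (Bpoly K d k₀).comp (1 - X) = 1 - Bpoly K d k₁ := by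
  have hk01 : d - k₀ - 1 = k₁ := by omega
  have hk10 : d - k₁ - 1 = k₀ := by omega
  have f0 : ((k₀.factorial : ℕ):K) ≠ 0 := by exact_mod_cast k₀.factorial_ne_zero
  have f1 : ((k₁.factorial : ℕ):K) ≠ 0 := by exact_mod_cast k₁.factorial_ne_zero
  have hcc : ((d.descFactorial (k₀+1) : ℕ):K) * ((k₀.factorial : ℕ):K)⁻¹
      = ((d.descFactorial (k₁+1) : ℕ):K) * ((k₁.factorial : ℕ):K)⁻¹ := by
    have e0 : k₁.factorial * d.descFactorial (k₀+1) = d.factorial := by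
      have h := Nat.factorial_mul_descFactorial (show k₀+1 ≤ d by omega)
      rwa [show d - (k₀+1) = k₁ by omega] at h
    have e1 : k₀.factorial * d.descFactorial (k₁+1) = d.factorial := by
      have h := Nat.factorial_mul_descFactorial (show k₁+1 ≤ d by omega)
      rwa [show d - (k₁+1) = k₀ by omega] at h
    have e2 : d.descFactorial (k₀+1) * k₁.factorial
        = d.descFactorial (k₁+1) * k₀.factorial := by
      rw [mul_comm, e0, mul_comm, e1]
    rw [← div_eq_mul_inv, ← div_eq_mul_inv, div_eq_div_iff f0 f1]
    exact_mod_cast e2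
  have hder : derivative ((Bpoly K d k₀).comp (1 - X) - (1 - Bpoly K d k₁)) = 0 := by
    rw [derivative_sub, derivative_sub, derivative_one, derivative_comp_one_sub_X,
      Bpoly_deriv K d k₀ h₀, Bpoly_deriv K d k₁ h₁, hk01, hk10]
    simp only [mul_comp, C_comp, pow_comp, X_comp, sub_comp, one_comp, sub_sub_cancel]
    rw [hcc]
    ring
  have hG := eq_C_of_derivative_eq_zero hder
  have hv0 : (Bpoly K d k₀).eval 0 = 0 := by
    rw [Bpoly_eval]
    refine Finset.sum_eq_zero fun i hi => ?_
    rw [Finset.mem_range] at hi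
    rw [zero_pow (show d - i ≠ 0 by omega), mul_zero]
  have hv1 : (Bpoly K d k₁).eval 1 = 1 := by
    rw [Bpoly_eval]
    simp only [one_pow, mul_one]
    exact B_one K d k₁ (by omega)
  have he : ((Bpoly K d k₀).comp (1 - X) - (1 - Bpoly K d k₁)).eval 1 = 0 := by
    have h10 : ((1:K[X]) - X).eval 1 = 0 := by simp
    rw [eval_sub, eval_comp, h10, hv0, eval_sub, eval_one, hv1]
    ring
  have hx := congrArg (eval (1:K)) hG
  rw [he, eval_C] at hx
  rw [← hx, C_0] at hG
  exact sub_eq_zero.mp hG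

end Stmt19Aux

/-- Tobin's conjugacy for the normalized single-cycle Belyi polynomials: for
`k₀ + k₁ = d − 1`, we have `B_{d,k}(1) = 1` and `f₀(z) = a·B_{d,k₀}(z) + c₀` is conjugate
via `z ↦ 1 − z` to `f₁(z) = a·B_{d,k₁}(z) + (1 − a − c₀)`, i.e.
`1 − f₀(1 − z) = f₁(z)` for all `z`. -/
theorem stmt19 (K : Type*) [Field K] [CharZero K] (d k₀ k₁ : ℕ)
    (hd : 3 ≤ d) (hk₀ : 1 ≤ k₀) (hk₀' : k₀ ≤ d - 2) (hk₁ : 1 ≤ k₁) (hk₁' : k₁ ≤ d - 2)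
    (hsum : k₀ + k₁ = d - 1) (a c₀ : K)
    (B : ℕ → K → K)
    (hB : ∀ k z, B k z = ∑ i ∈ Finset.range (k + 1),
        (-1 : K) ^ (k - i) * (∏ j ∈ (Finset.range (k + 1)).erase i, ((d : K) - (j : K)))
          * (((Nat.factorial (k - i) * Nat.factorial i : ℕ) : K))⁻¹ * z ^ (d - i)) :
    B k₀ 1 = 1 ∧ B k₁ 1 = 1 ∧
    ∀ z : K, 1 - (a * B k₀ (1 - z) + c₀) = a * B k₁ z + (1 - a - c₀) := by
  have hkd0 : k₀ + 2 ≤ d := by omega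
  have hkd1 : k₁ + 2 ≤ d := by omega
  have hBe : ∀ k z, B k z = (Stmt19Aux.Bpoly K d k).eval z := fun k z => by
    rw [hB, Stmt19Aux.Bpoly_eval]
  have h1 : ∀ k, k < d → B k 1 = 1 := fun k hk => by
    rw [hB]
    simp only [one_pow, mul_one]
    exact Stmt19Aux.B_one K d k hk
  refine ⟨h1 k₀ (by omega), h1 k₁ (by omega), fun z => ?_⟩
  have hc := congrArg (Polynomial.eval z) (Stmt19Aux.conj_poly K d k₀ k₁ hkd0 hkd1 hsum)
  simp only [Polynomial.eval_comp, Polynomial.eval_sub, Polynomial.eval_one,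
    Polynomial.eval_X] at hc
  rw [hBe k₀ (1 - z), hBe k₁ z, hc]
  ring
end
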